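/- arXiv:2509.14083 — 3 statements merged into one kernel-verified Lean document; each statement's English description precedes it below -/
import Mathlib

section
/- Let G be a finite group, H ≤ G, I ◁ D ≤ G, and C = ⟨c⟩ ≤ D cyclic with D = C·I. For g ∈ G, the orbit of the double coset IgH under the left C-action on I\G/H has cardinality |C^g| / |C^g ∩ (I^g · (D^g ∩ H))|, where X^g denotes g⁻¹Xg. -/
open DoubleCoset Pointwise

/-- For a subset `X` of a group and `g` an element, `X^g = g⁻¹Xg`. -/
def setConj {G : Type*} [Group G] (X : Set G) (g : G) : Set G :=
  (fun x => g⁻¹ * x * g) '' X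

/-! Transport everything by conjugation with `g`: the orbit of `IgH` is the image of `C^g` under
`x ↦ IgxH`. As `C^g ≤ D^g` normalises `I^g`, elements `x, y ∈ C^g` have the same image iff
`x⁻¹y ∈ I^g H`, and since `x⁻¹y ∈ D^g ⊇ I^g` this set may be cut down to the subgroup
`I^g (D^g ∩ H)`. Hence the orbit is in bijection with `C^g / (C^g ∩ I^g (D^g ∩ H))`. -/

section

variable {G : Type*} [Group G]

theorem setConj_eq_comap (K : Subgroup G) (g : G) :
    setConj (K : Set G) g = K.comap (MulAut.conj g).toMonoidHom := by
  ext x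
  simp only [setConj, Set.mem_image, SetLike.mem_coe, Subgroup.mem_comap,
    MulEquiv.coe_toMonoidHom, MulAut.conj_apply]
  constructor
  · rintro ⟨k, hk, rfl⟩
    simpa [mul_assoc] using hk
  · exact fun hx => ⟨g * x * g⁻¹, hx, by group⟩

namespace Subgroup

theorem le_normalizer_of_conj_mem {I D : Subgroup G}
    (hnormal : ∀ d ∈ D, ∀ i ∈ I, d * i * d⁻¹ ∈ I) : D ≤ normalizer (I : Set G) := by
  intro d hd
  rw [mem_normalizer_iff]
  refine fun i => ⟨hnormal d hd i, fun hi => ?_⟩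
  simpa [mul_assoc] using hnormal d⁻¹ (D.inv_mem hd) _ hi

theorem ncard_range_eq_index {K α : Type*} [Group K] (S : Subgroup K) {f : K → α}
    (hf : ∀ x y, f x = f y ↔ x⁻¹ * y ∈ S) : (Set.range f).ncard = S.index := by
  have hker : Setoid.ker f = QuotientGroup.leftRel S := by
    ext x y
    rw [Setoid.ker_def, hf, QuotientGroup.leftRel_apply]
  rw [index, ← Nat.card_coe_set_eq, ← Nat.card_congr (Setoid.quotientKerEquivRange f),
    hker]
  rfl

theorem relIndex_eq_card_div_card_inf (H K : Subgroup G) [Finite K] :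
    H.relIndex K = Nat.card K / Nat.card ↥(K ⊓ H) := by
  have : Finite ↥(K ⊓ H) := Finite.of_injective _ (inclusion_injective inf_le_left)
  have h := relIndex_mul_relIndex ⊥ (K ⊓ H) K bot_le inf_le_left
  rw [relIndex_bot_left, relIndex_bot_left, inf_relIndex_left] at h
  rw [← h, Nat.mul_div_cancel_left _ Nat.card_pos]

theorem mem_mul_inf_iff {I D H : Subgroup G} (hID : I ≤ D) {z : G} (hz : z ∈ D) :
    z ∈ (I : Set G) * H ↔ z ∈ (I : Set G) * ↑(D ⊓ H) := by
  constructor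
  · rintro ⟨i, hi, h, hh, rfl⟩
    have hhD : h ∈ D := by simpa using D.mul_mem (D.inv_mem (hID hi)) hz
    exact ⟨i, hi, h, ⟨hhD, hh⟩, rfl⟩
  · rintro ⟨i, hi, h, ⟨-, hh⟩, rfl⟩
    exact ⟨i, hi, h, hh, rfl⟩

end Subgroup

namespace DoubleCoset

theorem mk_mul_left_eq_mk_mul_left_iff (I H : Subgroup G) (g x y : G) :
    mk I H (g * x) = mk I H (g * y) ↔
      mk (I.comap (MulAut.conj g).toMonoidHom) H x =
        mk (I.comap (MulAut.conj g).toMonoidHom) H y := by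
  simp only [DoubleCoset.eq, Subgroup.mem_comap, MulEquiv.coe_toMonoidHom, MulAut.conj_apply]
  constructor
  · rintro ⟨i, hi, h, hh, hy⟩
    exact ⟨g⁻¹ * i * g, by simpa [mul_assoc] using hi, h, hh,
      by rw [← mul_right_inj g, hy]; group⟩
  · rintro ⟨j, hj, h, hh, rfl⟩
    exact ⟨g * j * g⁻¹, hj, h, hh, by group⟩

theorem mk_eq_mk_iff_of_mem_normalizer {I H : Subgroup G} {x : G}
    (hx : x ∈ Subgroup.normalizer (I : Set G)) (y : G) :
    mk I H x = mk I H y ↔ x⁻¹ * y ∈ (I : Set G) * H := by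
  rw [Subgroup.mem_normalizer_iff''] at hx
  rw [DoubleCoset.eq]
  constructor
  · rintro ⟨i, hi, h, hh, rfl⟩
    exact ⟨x⁻¹ * i * x, (hx i).1 hi, h, hh, by group⟩
  · rintro ⟨j, hj, h, hh, hjh⟩
    refine ⟨x * j * x⁻¹, (hx _).2 (by simpa [mul_assoc] using hj), h, hh, ?_⟩
    rw [← mul_right_inj x⁻¹, ← hjh]
    group

end DoubleCoset

theorem IsOfFinOrder.setOf_exists_pow_mul_eq_range {c : G} (hc : IsOfFinOrder c) {α : Type*}
    (f : G → α) (g : G) :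
    {q | ∃ m : ℕ, q = f (c ^ m * g)} =
      Set.range fun k : (Subgroup.zpowers c).comap (MulAut.conj g).toMonoidHom => f (g * k) := by
  ext q
  simp only [Set.mem_ofPred_eq, Set.mem_range, Subtype.exists, Subgroup.mem_comap,
    MulEquiv.coe_toMonoidHom, MulAut.conj_apply, ← hc.mem_powers_iff_mem_zpowers,
    Submonoid.mem_powers_iff]
  constructor
  · rintro ⟨m, rfl⟩
    exact ⟨g⁻¹ * c ^ m * g, ⟨m, by group⟩, by group⟩
  · rintro ⟨k, ⟨m, hm⟩, rfl⟩
    exact ⟨m, by rw [hm]; group⟩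

end

theorem card_cyclic_orbit_on_dosets_general
    (G : Type*) [Group G] [Fintype G] (H D I : Subgroup G) (c : G)
    (hID : I ≤ D)
    (hnormal : ∀ d ∈ D, ∀ i ∈ I, d * i * d⁻¹ ∈ I)
    (hc : c ∈ D)
    (g : G) :
    Set.ncard {q : DoubleCoset.Quotient (I : Set G) (H : Set G) |
        ∃ m : ℕ, q = DoubleCoset.mk I H (c ^ m * g)} =
      Set.ncard (setConj (Subgroup.zpowers c : Set G) g) /
        Set.ncard (setConj (Subgroup.zpowers c : Set G) g ∩
          (setConj (I : Set G) g * (setConj (D : Set G) g ∩ (H : Set G)))) := by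
  set φ := (MulAut.conj g).toMonoidHom
  set K := (Subgroup.zpowers c).comap φ
  set M := I.comap φ ⊔ (D.comap φ ⊓ H)
  have hDnorm : D.comap φ ≤ Subgroup.normalizer (I.comap φ : Set G) :=
    (Subgroup.comap_mono (Subgroup.le_normalizer_of_conj_mem hnormal)).trans
      (Subgroup.le_normalizer_comap φ)
  have hKD : K ≤ D.comap φ := Subgroup.comap_mono (Subgroup.zpowers_le.mpr hc)
  have hM : (M : Set G) = I.comap φ * ↑(D.comap φ ⊓ H) :=
    Subgroup.coe_mul_of_right_le_normalizer_left _ _ (inf_le_left.trans hDnorm)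
  have hfibre : ∀ x y : K, mk I H (g * x) = mk I H (g * y) ↔ x⁻¹ * y ∈ M.subgroupOf K := by
    intro x y
    rw [mk_mul_left_eq_mk_mul_left_iff, mk_eq_mk_iff_of_mem_normalizer (hDnorm (hKD x.2)),
      Subgroup.mem_subgroupOf, ← SetLike.mem_coe, hM,
      ← Subgroup.mem_mul_inf_iff (Subgroup.comap_mono hID) (hKD (x⁻¹ * y).2)]
    rfl
  rw [(isOfFinOrder_of_finite c).setOf_exists_pow_mul_eq_range,
    Subgroup.ncard_range_eq_index _ hfibre, ← Subgroup.relIndex,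
    Subgroup.relIndex_eq_card_div_card_inf]
  simp only [setConj_eq_comap]
  rw [← Subgroup.coe_inf, ← hM, ← Subgroup.coe_inf]
  simp only [← Nat.card_coe_set_eq, SetLike.coe_sort_coe]
  rfl

/-- Let `G` be a finite group, `H ≤ G`, `I ◁ D ≤ G`, and `C = ⟨c⟩ ≤ D` cyclic with
`D = C·I`.  For `g ∈ G`, the orbit of the double coset `IgH` under the left
`C`-action on `I\G/H` has cardinality `|C^g| / |C^g ∩ (I^g · (D^g ∩ H))|`. -/
theorem card_cyclic_orbit_on_dosets
    (G : Type*) [Group G] [Fintype G] (H D I : Subgroup G) (c : G)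
    (hID : I ≤ D)
    (hnormal : ∀ d ∈ D, ∀ i ∈ I, d * i * d⁻¹ ∈ I)
    (hc : c ∈ D)
    (hCI : ∀ d ∈ D, ∃ m : ℕ, ∃ i ∈ I, d = c ^ m * i)
    (g : G) :
    Set.ncard {q : DoubleCoset.Quotient (I : Set G) (H : Set G) |
        ∃ m : ℕ, q = DoubleCoset.mk I H (c ^ m * g)} =
      Set.ncard (setConj (Subgroup.zpowers c : Set G) g) /
        Set.ncard (setConj (Subgroup.zpowers c : Set G) g ∩
          (setConj (I : Set G) g * (setConj (D : Set G) g ∩ (H : Set G)))) :=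
  card_cyclic_orbit_on_dosets_general G H D I c hID hnormal hc g
end

section
/- Let G be a finite group with subgroups H₁, H₂, K. If for every conjugacy class 𝒞 of G we have |𝒞 ∩ H₁| = |𝒞 ∩ H₂|, then |K\G/H₁| = |K\G/H₂|. -/
/-!
The double cosets `K \ G / H` are the orbits of `K × H` acting on `G` by `(k, h) • g = k g h⁻¹`,
and `(k, h)` fixes `g` exactly when `g h g⁻¹ = k`. Burnside's lemma therefore gives
`|K \ G / H| · |K| · |H| = ∑_{h ∈ H} #{g | g h g⁻¹ ∈ K}`. The summand is a class function of `h`,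
and the sum of a class function over `H` only depends on the numbers `|C ∩ H|` for the conjugacy
classes `C` of `G`; so does `|H|`, the sum of the constant function `1`.
-/

open DoubleCoset MulAction

section

variable {G : Type*} [Group G]

namespace Subgroup

def IsGassmannEquivalent (H₁ H₂ : Subgroup G) : Prop :=
  ∀ g : G, ({x | IsConj g x} ∩ (H₁ : Set G)).ncard = ({x | IsConj g x} ∩ (H₂ : Set G)).ncard

theorem ncard_isConj_inter_eq_card (H : Subgroup G) (g : G) :
    ({x | IsConj g x} ∩ (H : Set G)).ncard =
      Nat.card {h : H // ConjClasses.mk (h : G) = ConjClasses.mk g} := by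
  rw [← Nat.card_coe_set_eq]
  refine Nat.card_congr <| .trans (.subtypeEquivRight fun x => and_comm) <|
    (Equiv.subtypeSubtypeEquivSubtypeInter (· ∈ H) _).symm.trans
      (.subtypeEquivRight fun h => ?_)
  rw [ConjClasses.mk_eq_mk_iff_isConj, isConj_comm]
  rfl

namespace IsGassmannEquivalent

variable {H₁ H₂ : Subgroup G}

theorem card_fiber_eq (hgass : IsGassmannEquivalent H₁ H₂) (c : ConjClasses G) :
    Nat.card {h : H₁ // ConjClasses.mk (h : G) = c} =
      Nat.card {h : H₂ // ConjClasses.mk (h : G) = c} := by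
  obtain ⟨g, rfl⟩ := ConjClasses.mk_surjective c
  rw [← ncard_isConj_inter_eq_card, ← ncard_isConj_inter_eq_card, hgass g]

theorem sum_eq [Finite G] [Fintype H₁] [Fintype H₂] {M : Type*} [AddCommMonoid M] {f : G → M}
    (hgass : IsGassmannEquivalent H₁ H₂) (hf : ∀ x y, IsConj x y → f x = f y) :
    ∑ h : H₁, f h = ∑ h : H₂, f h := by
  classical
  have := Fintype.ofFinite (ConjClasses G)
  obtain ⟨F, rfl⟩ : ∃ F : ConjClasses G → M, f = F ∘ ConjClasses.mk := ⟨Quotient.lift f hf, rfl⟩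
  have fiberwise (H : Subgroup G) [Fintype H] : ∑ h : H, F (ConjClasses.mk (h : G)) =
      ∑ c, Nat.card {h : H // ConjClasses.mk (h : G) = c} • F c := by
    simp only [← Fintype.sum_fiberwise' (fun h : H => ConjClasses.mk (h : G)) F,
      Finset.sum_const, Finset.card_univ, Nat.card_eq_fintype_card]
  simp only [Function.comp_apply, fiberwise, hgass.card_fiber_eq]

theorem card_eq [Finite G] (hgass : IsGassmannEquivalent H₁ H₂) : Nat.card H₁ = Nat.card H₂ := by
  have := Fintype.ofFinite H₁
  have := Fintype.ofFinite H₂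
  simpa using hgass.sum_eq (f := fun _ => (1 : ℕ)) fun _ _ _ => rfl

end IsGassmannEquivalent

theorem card_conj_mem_eq_of_isConj (K : Subgroup G) {x y : G} (hxy : IsConj x y) :
    Nat.card {g : G // g * x * g⁻¹ ∈ K} = Nat.card {g : G // g * y * g⁻¹ ∈ K} := by
  obtain ⟨c, rfl⟩ := isConj_iff.mp hxy
  exact Nat.card_congr <| (Equiv.mulRight c⁻¹).subtypeEquiv fun g => by simp [mul_assoc]

end Subgroup

namespace DoubleCoset

variable (K H : Subgroup G)

abbrev prodMulAction : MulAction (K × H) G where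
  smul p g := (p.1 : G) * g * (p.2 : G)⁻¹
  one_smul g := by
    show ((1 : K) : G) * g * ((1 : H) : G)⁻¹ = g
    simp
  mul_smul p q g := by
    show ((p.1 * q.1 : K) : G) * g * ((p.2 * q.2 : H) : G)⁻¹ =
      p.1 * (q.1 * g * (q.2 : G)⁻¹) * (p.2 : G)⁻¹
    push_cast
    group

attribute [local instance] prodMulAction

theorem prodMulAction_smul (p : K × H) (g : G) : p • g = (p.1 : G) * g * (p.2 : G)⁻¹ := rfl

theorem setoid_eq_orbitRel : setoid (K : Set G) H = orbitRel (K × H) G := by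
  ext x y
  rw [rel_iff, orbitRel_apply, mem_orbit_iff]
  constructor
  · rintro ⟨k, hk, h, hh, rfl⟩
    exact ⟨(⟨k, hk⟩⁻¹, ⟨h, hh⟩), by simp [prodMulAction_smul, mul_assoc]⟩
  · rintro ⟨⟨k, h⟩, rfl⟩
    exact ⟨k⁻¹, inv_mem k.2, h, h.2, by simp [prodMulAction_smul, mul_assoc]⟩

def sigmaFixedByEquiv :
    (Σ p : K × H, fixedBy G p) ≃ Σ h : H, {g : G // g * h * g⁻¹ ∈ K} :=
  (Equiv.sigmaCongrRight (β₂ := fun p : K × H => {g : G // g * p.2 * g⁻¹ = p.1}) fun p =>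
    Equiv.subtypeEquivRight fun g => by
      rw [mem_fixedBy, prodMulAction_smul, mul_inv_eq_iff_eq_mul, mul_inv_eq_iff_eq_mul,
        eq_comm]).trans
  { toFun := fun ⟨⟨k, h⟩, g, hg⟩ => ⟨h, g, hg ▸ k.2⟩
    invFun := fun ⟨h, g, hg⟩ => ⟨(⟨_, hg⟩, h), g, rfl⟩
    left_inv := by
      rintro ⟨⟨⟨k, hk⟩, h⟩, g, hg⟩
      obtain rfl : g * h * g⁻¹ = k := hg
      rfl
    right_inv := fun _ => rfl }

theorem card_quotient_mul_card_mul_card [Finite G] [Fintype H] :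
    Nat.card (Quotient (K : Set G) H) * (Nat.card K * Nat.card H) =
      ∑ h : H, Nat.card {g : G // g * h * g⁻¹ ∈ K} := by
  rw [← Nat.card_sigma, ← Nat.card_congr (sigmaFixedByEquiv K H),
    Nat.card_congr (sigmaFixedByEquivOrbitsProdGroup (K × H) G), Nat.card_prod, Nat.card_prod,
    Quotient, setoid_eq_orbitRel]

end DoubleCoset

end

/-- If `H₁, H₂` are Gassmann-equivalent subgroups of a finite group `G`
(every conjugacy class of `G` meets them in sets of equal cardinality),
then `|K\G/H₁| = |K\G/H₂|` for every subgroup `K ≤ G`. -/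
theorem card_dosets_eq_of_gassmann
    (G : Type*) [Group G] [Fintype G] (H₁ H₂ K : Subgroup G)
    (hgass : ∀ g : G,
      Set.ncard ({x | IsConj g x} ∩ (H₁ : Set G)) =
        Set.ncard ({x | IsConj g x} ∩ (H₂ : Set G))) :
    Nat.card (DoubleCoset.Quotient (K : Set G) (H₁ : Set G)) =
      Nat.card (DoubleCoset.Quotient (K : Set G) (H₂ : Set G)) := by
  classical
  have hgass : H₁.IsGassmannEquivalent H₂ := hgass
  have hpos : 0 < Nat.card K * Nat.card H₂ := Nat.mul_pos Nat.card_pos Nat.card_pos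
  refine Nat.eq_of_mul_eq_mul_right hpos ?_
  calc Nat.card (DoubleCoset.Quotient (K : Set G) H₁) * (Nat.card K * Nat.card H₂)
      = Nat.card (DoubleCoset.Quotient (K : Set G) H₁) * (Nat.card K * Nat.card H₁) := by
        rw [hgass.card_eq]
    _ = ∑ h : H₁, Nat.card {g : G // g * h * g⁻¹ ∈ K} :=
        card_quotient_mul_card_mul_card K H₁
    _ = ∑ h : H₂, Nat.card {g : G // g * h * g⁻¹ ∈ K} :=
        hgass.sum_eq fun _ _ => K.card_conj_mem_eq_of_isConj
    _ = Nat.card (DoubleCoset.Quotient (K : Set G) H₂) * (Nat.card K * Nat.card H₂) :=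
        (card_quotient_mul_card_mul_card K H₂).symm
end

section
/- Let G be a finite group and H₁, H₂ ≤ G. Suppose that for every cyclic subgroup C ≤ G, |C\G/H₁| = |C\G/H₂|. Then for every conjugacy class 𝒞 of G, |𝒞 ∩ H₁| = |𝒞 ∩ H₂|. -/
/-!
Double cosets `C\G/H` are the `C`-orbits on `G/H`, so Burnside's lemma for `C = ⟨g⟩` expresses
the hypothesis as an equality of the sums of `|Fix_{G/Hᵢ}(c)|` over `c ∈ ⟨g⟩`. By induction on
the order of `g`, the terms with `⟨c⟩ < ⟨g⟩` already agree, and the remaining ones all equal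
`|Fix(g)|`; hence the permutation characters of `G/H₁` and `G/H₂` coincide. Both
`|Fix_{G/H}(g)| * |H|` and `|g^G ∩ H| * |C_G(g)|` count the `x` with `x g x⁻¹ ∈ H`, and `g = 1`
gives `|H₁| = |H₂|`.
-/

open DoubleCoset MulAction Subgroup Finset

namespace DoubleCoset

variable {G : Type*} [Group G]

theorem rel_iff_orbitRel (K H : Subgroup G) (a b : G) :
    setoid (K : Set G) (H : Set G) a b ↔ orbitRel K (G ⧸ H) a b := by
  rw [DoubleCoset.rel_iff, orbitRel_apply, mem_orbit_iff]
  change _ ↔ ∃ k : K, (((k : G) * b : G) : G ⧸ H) = a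
  simp only [Subtype.exists, QuotientGroup.eq, exists_prop]
  constructor
  · rintro ⟨k, hk, h, hh, rfl⟩
    exact ⟨k⁻¹, K.inv_mem hk, by simpa [mul_assoc] using H.inv_mem hh⟩
  · rintro ⟨k, hk, hkb⟩
    exact ⟨k⁻¹, K.inv_mem hk, _, H.inv_mem hkb, by group⟩

noncomputable def quotientEquivOrbitRelQuotient (K H : Subgroup G) :
    DoubleCoset.Quotient (K : Set G) (H : Set G) ≃ orbitRel.Quotient K (G ⧸ H) :=
  (Quotient.congrRight fun a b => (rel_iff_orbitRel K H a b).trans Quotient.eq.symm).trans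
    (Setoid.quotientKerEquivOfSurjective
      (fun g : G => (⟦(g : G ⧸ H)⟧ : orbitRel.Quotient K (G ⧸ H)))
      (Quotient.mk_surjective.comp QuotientGroup.mk_surjective))

end DoubleCoset

section

variable {G : Type*} [Group G]

theorem orderOf_lt_orderOf_of_mem_zpowers [Finite G] {g h : G} (hmem : h ∈ zpowers g)
    (hne : zpowers h ≠ zpowers g) : orderOf h < orderOf g := by
  refine (Nat.le_of_dvd (orderOf_pos g) (orderOf_dvd_of_mem_zpowers hmem)).lt_of_ne
    fun heq => hne ?_
  exact eq_of_le_of_card_ge (zpowers_le.2 hmem) (by rw [Nat.card_zpowers, Nat.card_zpowers, heq])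

namespace MulAction

variable {α β : Type*} [MulAction G α] [MulAction G β]

theorem fixedBy_eq_of_zpowers_eq {g h : G} (hgh : zpowers g = zpowers h) :
    fixedBy α g = fixedBy α h := by
  have key : ∀ {x y : G}, x ∈ zpowers y → fixedBy α y ⊆ fixedBy α x := by
    rintro x y ⟨j, rfl⟩
    exact fixedBy_subset_fixedBy_zpow α y j
  exact (key (hgh ▸ mem_zpowers h)).antisymm (key (hgh.symm ▸ mem_zpowers g))

theorem sum_card_fixedBy_eq_card_orbitRel_mul_card [Fintype G] [Finite α] :
    ∑ g : G, Nat.card (fixedBy α g) = Nat.card (orbitRel.Quotient G α) * Nat.card G := by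
  classical
  have := Fintype.ofFinite α
  have := Fintype.ofFinite (orbitRel.Quotient G α)
  simp only [Nat.card_eq_fintype_card]
  exact sum_card_fixedBy_eq_card_orbits_mul_card_group G α

theorem card_fixedBy_eq_of_card_orbitRel_zpowers_eq [Finite G] [Finite α] [Finite β]
    (h : ∀ g : G, Nat.card (orbitRel.Quotient (zpowers g) α) =
      Nat.card (orbitRel.Quotient (zpowers g) β)) (g : G) :
    Nat.card (fixedBy α g) = Nat.card (fixedBy β g) := by
  classical
  induction hn : orderOf g using Nat.strong_induction_on generalizing g with
  | _ n ih =>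
  subst hn
  have := Fintype.ofFinite (zpowers g)
  let d : G → ℤ := fun c => Nat.card (fixedBy α c) - Nat.card (fixedBy β c)
  have hburnside : ∑ c : zpowers g, d c = 0 := by
    have hα := sum_card_fixedBy_eq_card_orbitRel_mul_card (G := zpowers g) (α := α)
    have hβ := sum_card_fixedBy_eq_card_orbitRel_mul_card (G := zpowers g) (α := β)
    simp only [d, sum_sub_distrib, sub_eq_zero]
    exact_mod_cast hα.trans ((h g) ▸ hβ.symm)
  have hterm : ∀ c : zpowers g, d c = if zpowers (c : G) = zpowers g then d g else 0 := by
    intro c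
    split_ifs with hc
    · simp only [d, fixedBy_eq_of_zpowers_eq hc]
    · simp only [d, ih _ (orderOf_lt_orderOf_of_mem_zpowers c.2 hc) c rfl, sub_self]
  have hgen : 0 < #{c : zpowers g | zpowers (c : G) = zpowers g} :=
    card_pos.2 ⟨⟨g, mem_zpowers g⟩, by simp⟩
  rw [sum_congr rfl fun c _ => hterm c, sum_ite, sum_const_zero, add_zero,
    sum_const, nsmul_eq_mul, mul_eq_zero, sub_eq_zero] at hburnside
  exact_mod_cast hburnside.resolve_left (by exact_mod_cast hgen.ne')

theorem card_setOf_smul_mem (a : α) (S : Set α) :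
    Nat.card {g : G | g • a ∈ S} =
      Nat.card ↥(orbit G a ∩ S) * Nat.card (stabilizer G a) := by
  have hrange : Set.range (ofQuotientStabilizer G a) = orbit G a :=
    Set.ext fun b => ⟨fun ⟨q, hq⟩ => hq ▸ ofQuotientStabilizer_mem_orbit G a q,
      fun ⟨g, hg⟩ => ⟨g, hg⟩⟩
  calc Nat.card {g : G | g • a ∈ S}
      = Nat.card (stabilizer G a × (ofQuotientStabilizer G a ⁻¹' S)) :=
        Nat.card_congr (QuotientGroup.preimageMkEquivSubgroupProdSet (stabilizer G a)
          (ofQuotientStabilizer G a ⁻¹' S))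
    _ = Nat.card ↥(orbit G a ∩ S) * Nat.card (stabilizer G a) := by
        rw [Nat.card_prod, mul_comm,
          ← Nat.card_image_of_injective (injective_ofQuotientStabilizer G a),
          Set.image_preimage_eq_inter_range, hrange, Set.inter_comm]

end MulAction

namespace ConjAct

theorem card_setOf_smul_mem_eq_card_fixedBy_mul (H : Subgroup G) (g : G) :
    Nat.card {x : ConjAct G | x • g ∈ (H : Set G)} =
      Nat.card (fixedBy (G ⧸ H) g) * Nat.card H := by
  have hmem : ∀ x : ConjAct G, x • g ∈ (H : Set G) ↔
      (ofConjAct x)⁻¹ ∈ QuotientGroup.mk ⁻¹' fixedBy (G ⧸ H) g := by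
    intro x
    rw [Set.mem_preimage, mem_fixedBy, MulAction.Quotient.smul_mk, smul_eq_mul, QuotientGroup.eq,
      smul_def, SetLike.mem_coe, ← inv_mem_iff]
    group
  rw [mul_comm, ← Nat.card_prod]
  exact Nat.card_congr (((ofConjAct.toEquiv.trans (Equiv.inv G)).subtypeEquiv hmem).trans
    (QuotientGroup.preimageMkEquivSubgroupProdSet _ _))

theorem card_setOf_smul_mem_eq_ncard_mul (g : G) (S : Set G) :
    Nat.card {x : ConjAct G | x • g ∈ S} =
      Set.ncard ({x | IsConj g x} ∩ S) * Nat.card (stabilizer (ConjAct G) g) := by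
  have horbit : orbit (ConjAct G) g = {x | IsConj g x} :=
    Set.ext fun _ => mem_orbit_conjAct.trans isConj_comm
  rw [card_setOf_smul_mem, horbit, Nat.card_coe_set_eq]

end ConjAct

end

/-- If `H₁, H₂` are subgroups of a finite group `G` such that
`|C\G/H₁| = |C\G/H₂|` for every cyclic subgroup `C ≤ G`, then `H₁` and `H₂`
are Gassmann equivalent: every conjugacy class of `G` meets them in sets of
equal cardinality. -/
theorem gassmann_of_card_dosets_eq_for_cyclic
    (G : Type*) [Group G] [Fintype G] (H₁ H₂ : Subgroup G)
    (hdc : ∀ C : Subgroup G, IsCyclic C →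
      Nat.card (DoubleCoset.Quotient (C : Set G) (H₁ : Set G)) =
        Nat.card (DoubleCoset.Quotient (C : Set G) (H₂ : Set G))) :
    ∀ g : G,
      Set.ncard ({x | IsConj g x} ∩ (H₁ : Set G)) =
        Set.ncard ({x | IsConj g x} ∩ (H₂ : Set G)) := by
  have hfix : ∀ g : G, Nat.card (fixedBy (G ⧸ H₁) g) = Nat.card (fixedBy (G ⧸ H₂) g) :=
    card_fixedBy_eq_of_card_orbitRel_zpowers_eq fun g =>
      (Nat.card_congr (quotientEquivOrbitRelQuotient _ _)).symm.trans
        ((hdc (zpowers g) inferInstance).trans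
          (Nat.card_congr (quotientEquivOrbitRelQuotient _ _)))
  have hcard : Nat.card H₁ = Nat.card H₂ := by
    have hquot : Nat.card (G ⧸ H₁) = Nat.card (G ⧸ H₂) := by
      simpa only [fixedBy_one_eq_univ, Nat.card_univ] using hfix 1
    refine Nat.eq_of_mul_eq_mul_left (Nat.card_pos (α := G ⧸ H₁)) ?_
    rw [← card_eq_card_quotient_mul_card_subgroup, hquot,
      ← card_eq_card_quotient_mul_card_subgroup]
  intro g
  refine Nat.eq_of_mul_eq_mul_right (Nat.card_pos (α := stabilizer (ConjAct G) g)) ?_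
  rw [← ConjAct.card_setOf_smul_mem_eq_ncard_mul, ← ConjAct.card_setOf_smul_mem_eq_ncard_mul,
    ConjAct.card_setOf_smul_mem_eq_card_fixedBy_mul,
    ConjAct.card_setOf_smul_mem_eq_card_fixedBy_mul, hfix, hcard]
end
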